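/- Let M : Mₙ(ℂ) → Mₘ(ℂ) be a completely positive map with Stinespring representation V : ℂ^n → ℂ^m ⊗ ℂ^e (so M(ρ) = Tr_E(V ρ V*)), and let M^C(ρ) = Tr_B(V ρ V*) be the associated complementary map Mₙ(ℂ) → M_e(ℂ). For 0 < α < 1, the completely bounded 1→α quasi-norm satisfies ‖M‖_{cb,1→α} = min over nonzero positive semidefinite X ∈ Mₙ(ℂ) of ‖M^C(X)‖_α / ‖X‖_α. -/

import Mathlib

open Matrix
open scoped Kronecker
open scoped Classical
open scoped ComplexOrder

noncomputable section

namespace QIT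

variable {ι κ μ ν : Type*}

/-- Functional calculus for Hermitian matrices (junk value `0` otherwise). -/
def mfun [Fintype ι] [DecidableEq ι] (f : ℝ → ℝ) (A : Matrix ι ι ℂ) : Matrix ι ι ℂ :=
  if hA : A.IsHermitian then
    (hA.eigenvectorUnitary : Matrix ι ι ℂ) *
      Matrix.diagonal (fun i => (f (hA.eigenvalues i) : ℂ)) *
      (star (hA.eigenvectorUnitary : Matrix ι ι ℂ))
  else 0

/-- Real matrix power via continuous functional calculus. -/
def mpow [Fintype ι] [DecidableEq ι] (A : Matrix ι ι ℂ) (p : ℝ) : Matrix ι ι ℂ :=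
  mfun (fun x => x ^ p) A

/-- Matrix logarithm on the support, via functional calculus (`Real.log 0 = 0`). -/
def mlog [Fintype ι] [DecidableEq ι] (A : Matrix ι ι ℂ) : Matrix ι ι ℂ :=
  mfun Real.log A

/-- Real part of the trace. -/
def traceR [Fintype ι] (A : Matrix ι ι ℂ) : ℝ := A.trace.re

/-- The Schatten `α` quasi-norm `(Tr X^α)^(1/α)`. -/
def schatten [Fintype ι] [DecidableEq ι] (α : ℝ) (A : Matrix ι ι ℂ) : ℝ :=
  traceR (mpow A α) ^ (1 / α)

/-- Partial trace over the first tensor factor. -/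
def trLeft [Fintype ι] (M : Matrix (ι × κ) (ι × κ) ℂ) : Matrix κ κ ℂ :=
  Matrix.of fun i j => ∑ k, M (k, i) (k, j)

/-- Partial trace over the second tensor factor. -/
def trRight [Fintype κ] (M : Matrix (ι × κ) (ι × κ) ℂ) : Matrix ι ι ℂ :=
  Matrix.of fun i j => ∑ k, M (i, k) (j, k)

/-- Tensor (Kronecker) product of two linear maps on matrix algebras. -/
def tensorMap [Fintype ι] [DecidableEq ι] [Fintype κ] [DecidableEq κ] [Fintype μ] [Fintype ν]
    (M₁ : Matrix ι ι ℂ →ₗ[ℂ] Matrix μ μ ℂ) (M₂ : Matrix κ κ ℂ →ₗ[ℂ] Matrix ν ν ℂ) :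
    Matrix (ι × κ) (ι × κ) ℂ →ₗ[ℂ] Matrix (μ × ν) (μ × ν) ℂ where
  toFun X := ∑ k₁ : ι, ∑ l₁ : ι, ∑ k₂ : κ, ∑ l₂ : κ,
      X (k₁, k₂) (l₁, l₂) •
        (M₁ (Matrix.single k₁ l₁ 1) ⊗ₖ M₂ (Matrix.single k₂ l₂ 1))
  map_add' X Y := by
    simp [Matrix.add_apply, add_smul, Finset.sum_add_distrib]
  map_smul' c X := by
    simp [Matrix.smul_apply, smul_smul, Finset.smul_sum]

/-- The Choi matrix of a linear map on matrix algebras. -/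
def choi [Fintype ι] [DecidableEq ι] [Fintype μ]
    (M : Matrix ι ι ℂ →ₗ[ℂ] Matrix μ μ ℂ) : Matrix (ι × μ) (ι × μ) ℂ :=
  ∑ i : ι, ∑ j : ι, (Matrix.single i j (1 : ℂ)) ⊗ₖ M (Matrix.single i j 1)

/-- Complete positivity: positivity of the Choi matrix. -/
def IsCPMap [Fintype ι] [DecidableEq ι] [Fintype μ]
    (M : Matrix ι ι ℂ →ₗ[ℂ] Matrix μ μ ℂ) : Prop :=
  (choi M).PosSemidef

/-- A quantum channel: completely positive and trace preserving. -/
def IsChannel [Fintype ι] [DecidableEq ι] [Fintype μ]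
    (M : Matrix ι ι ℂ →ₗ[ℂ] Matrix μ μ ℂ) : Prop :=
  IsCPMap M ∧ ∀ X, (M X).trace = X.trace

/-- A state (density matrix). -/
def IsState [Fintype ι] (ρ : Matrix ι ι ℂ) : Prop :=
  ρ.PosSemidef ∧ ρ.trace = 1

/-- A pure state: a rank-one density matrix. -/
def IsPureState [Fintype ι] (ρ : Matrix ι ι ℂ) : Prop :=
  IsState ρ ∧ ρ.rank = 1

/-- The completely bounded `1 → α` quasi-norm, for `0 < α < 1`. -/
def cbNorm [Fintype ι] [DecidableEq ι] [Fintype μ] [DecidableEq μ]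
    (α : ℝ) (M : Matrix ι ι ℂ →ₗ[ℂ] Matrix μ μ ℂ) : ℝ :=
  sInf { r : ℝ | ∃ φ : Matrix (ι × ι) (ι × ι) ℂ, IsPureState φ ∧
    r = schatten α (tensorMap LinearMap.id M φ) / schatten α (trLeft φ) }

/-- The sandwiched Rényi divergence of order `α`. -/
def sandwichedRenyi [Fintype ι] [DecidableEq ι] (α : ℝ) (ρ σ : Matrix ι ι ℂ) : EReal :=
  if ρ * σ = 0 then ⊤
  else ((1 / (α - 1)) *
    Real.log (traceR (mpow (mpow σ ((1 - α) / (2 * α)) * ρ * mpow σ ((1 - α) / (2 * α))) α)) : ℝ)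

/-- The channel Rényi information `I_α`. -/
def renyiChannelInfo [Fintype ι] [DecidableEq ι] [Fintype μ] [DecidableEq μ]
    (α : ℝ) (N : Matrix ι ι ℂ →ₗ[ℂ] Matrix μ μ ℂ) : EReal :=
  sSup { d : EReal | ∃ ρ : Matrix (ι × ι) (ι × ι) ℂ, IsPureState ρ ∧
    d = sInf { e : EReal | ∃ σ : Matrix μ μ ℂ, IsState σ ∧
      e = sandwichedRenyi α (tensorMap LinearMap.id N ρ) (trRight ρ ⊗ₖ σ) } }

/-- Support inclusion `supp ρ ⊆ supp σ` (for Hermitian matrices: `ker σ ⊆ ker ρ`). -/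
def SuppLE [Fintype ι] (ρ σ : Matrix ι ι ℂ) : Prop :=
  ∀ v : ι → ℂ, σ.mulVec v = 0 → ρ.mulVec v = 0

/-- The quantum (Umegaki) relative entropy, `+∞` if the support condition fails. -/
def relEnt [Fintype ι] [DecidableEq ι] (ρ σ : Matrix ι ι ℂ) : EReal :=
  if SuppLE ρ σ then (traceR (ρ * (mlog ρ - mlog σ)) : ℝ) else ⊤

/-- The relative entropy variance. -/
def relEntVar [Fintype ι] [DecidableEq ι] (ρ σ : Matrix ι ι ℂ) : ℝ :=
  traceR (ρ * (mlog ρ - mlog σ) ^ 2) - (traceR (ρ * (mlog ρ - mlog σ))) ^ 2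

/-- Mutual information of a bipartite state. -/
def mutInf [Fintype ι] [DecidableEq ι] [Fintype κ] [DecidableEq κ]
    (ρ : Matrix (ι × κ) (ι × κ) ℂ) : EReal :=
  relEnt ρ (trRight ρ ⊗ₖ trLeft ρ)

/-- The channel mutual information `I(N)`. -/
def channelMutInf [Fintype ι] [DecidableEq ι] [Fintype μ] [DecidableEq μ]
    (N : Matrix ι ι ℂ →ₗ[ℂ] Matrix μ μ ℂ) : EReal :=
  sSup { d : EReal | ∃ ρ : Matrix (ι × ι) (ι × ι) ℂ, IsState ρ ∧
    d = mutInf (tensorMap LinearMap.id N ρ) }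

/-- Von Neumann entropy. -/
def vnEntropy [Fintype ι] [DecidableEq ι] (ρ : Matrix ι ι ℂ) : ℝ :=
  - traceR (ρ * mlog ρ)

/-- Conditional mutual information `I(X : Z | Y)` of a tripartite state on `(X × Y) × Z`. -/
def condMutInf {x y z : Type*} [Fintype x] [DecidableEq x] [Fintype y] [DecidableEq y]
    [Fintype z] [DecidableEq z] (ρ : Matrix ((x × y) × z) ((x × y) × z) ℂ) : ℝ :=
  vnEntropy (trRight ρ) +
    vnEntropy (trLeft ((Matrix.reindex (Equiv.prodAssoc x y z) (Equiv.prodAssoc x y z)) ρ)) -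
    vnEntropy ρ - vnEntropy (trLeft (trRight ρ))

/-- Membership in `O_N`: output states (with arbitrary ancilla `A`) attaining `I(N)`. -/
def inOutputSet [Fintype ι] [DecidableEq ι] [Fintype μ] [DecidableEq μ]
    {A : Type*} [Fintype A] [DecidableEq A]
    (N : Matrix ι ι ℂ →ₗ[ℂ] Matrix μ μ ℂ) (ρAB : Matrix (A × μ) (A × μ) ℂ) : Prop :=
  (∃ ρ : Matrix (A × ι) (A × ι) ℂ, IsState ρ ∧ ρAB = tensorMap LinearMap.id N ρ) ∧
    mutInf ρAB = channelMutInf N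

/-- The maximal channel dispersion. -/
def Vmax [Fintype ι] [DecidableEq ι] [Fintype μ] [DecidableEq μ]
    (N : Matrix ι ι ℂ →ₗ[ℂ] Matrix μ μ ℂ) : ℝ :=
  sSup { v : ℝ | ∃ (a : ℕ) (ρAB : Matrix (Fin a × μ) (Fin a × μ) ℂ),
    inOutputSet N ρAB ∧ v = relEntVar ρAB (trRight ρAB ⊗ₖ trLeft ρAB) }

/-- The minimal channel dispersion. -/
def Vmin [Fintype ι] [DecidableEq ι] [Fintype μ] [DecidableEq μ]
    (N : Matrix ι ι ℂ →ₗ[ℂ] Matrix μ μ ℂ) : ℝ :=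
  sInf { v : ℝ | ∃ (a : ℕ) (ρAB : Matrix (Fin a × μ) (Fin a × μ) ℂ),
    inOutputSet N ρAB ∧ v = relEntVar ρAB (trRight ρAB ⊗ₖ trLeft ρAB) }

/-- The unnormalized maximally entangled state `Φ = ∑ E_ij ⊗ E_ij`. -/
def maxEnt (ι : Type*) [Fintype ι] [DecidableEq ι] : Matrix (ι × ι) (ι × ι) ℂ :=
  ∑ i : ι, ∑ j : ι, (Matrix.single i j (1 : ℂ)) ⊗ₖ (Matrix.single i j 1)

/-- The trace map, as a map to `M₁(ℂ)`. -/
def traceMap (κ : Type*) [Fintype κ] : Matrix κ κ ℂ →ₗ[ℂ] Matrix (Fin 1) (Fin 1) ℂ where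
  toFun X := Matrix.of fun _ _ => X.trace
  map_add' X Y := by ext i j; simp [Matrix.trace_add]
  map_smul' c X := by ext i j; simp [Matrix.trace_smul]

/-- Two-sided multiplication `X ↦ S X S` as a linear map. -/
def sandwichMap [Fintype μ] (S : Matrix μ μ ℂ) : Matrix μ μ ℂ →ₗ[ℂ] Matrix μ μ ℂ where
  toFun X := S * X * S
  map_add' X Y := by simp [mul_add, add_mul]
  map_smul' c X := by simp [Matrix.mul_smul, Matrix.smul_mul]

/-- Extended-real logarithm with `log 0 = -∞`. -/
def elog (x : ℝ) : EReal := if x = 0 then ⊥ else (Real.log x : EReal)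

open Polynomial

section FunCalc
variable {ι κ : Type*} [Fintype ι] [DecidableEq ι] [Fintype κ] [DecidableEq κ]

lemma aux_conj_pow (U B : Matrix ι ι ℂ) (hU' : Uᴴ * U = 1) (k : ℕ) :
    (U * B * Uᴴ) ^ (k + 1) = U * B ^ (k + 1) * Uᴴ := by
  induction k with
  | zero => simp
  | succ k ih =>
    rw [pow_succ, ih, pow_succ]
    simp only [Matrix.mul_assoc]
    rw [← Matrix.mul_assoc Uᴴ U, hU', Matrix.one_mul]
    simp [pow_succ, Matrix.mul_assoc]

lemma aux_aeval_conj (U B : Matrix ι ι ℂ) (hU : U * Uᴴ = 1) (hU' : Uᴴ * U = 1) (p : ℝ[X]) :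
    aeval (U * B * Uᴴ) p = U * aeval B p * Uᴴ := by
  induction p using Polynomial.induction_on' with
  | add p q hp hq => rw [map_add, map_add, hp, hq, Matrix.mul_add, Matrix.add_mul]
  | monomial n a =>
    rw [aeval_monomial, aeval_monomial]
    cases n with
    | zero =>
      simp only [pow_zero, mul_one, Algebra.algebraMap_eq_smul_one]
      rw [Matrix.mul_smul, Matrix.mul_one, Matrix.smul_mul, hU]
    | succ n =>
      rw [aux_conj_pow U B hU', Algebra.algebraMap_eq_smul_one]
      simp only [smul_mul_assoc, one_mul, Matrix.mul_smul, Matrix.smul_mul]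

lemma aux_aeval_diagonal (g : ι → ℂ) (p : ℝ[X]) :
    aeval (Matrix.diagonal g) p = Matrix.diagonal (fun i => aeval (g i) p) := by
  induction p using Polynomial.induction_on' with
  | add p q hp hq =>
    rw [map_add, hp, hq, Matrix.diagonal_add]
    congr 1
    funext i
    simp
  | monomial n a =>
    rw [aeval_monomial, Matrix.diagonal_pow, Matrix.algebraMap_eq_diagonal,
      Matrix.diagonal_mul_diagonal]
    congr 1
    funext i
    simp [aeval_monomial, Pi.pow_apply, Pi.algebraMap_apply]

lemma aux_aeval_decomp {A U : Matrix ι ι ℂ} (hU : U * Uᴴ = 1) (hU' : Uᴴ * U = 1)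
    {d : ι → ℝ} (hA : A = U * Matrix.diagonal (fun i => (d i : ℂ)) * Uᴴ) (p : ℝ[X]) :
    aeval A p = U * Matrix.diagonal (fun i => ((p.eval (d i) : ℝ) : ℂ)) * Uᴴ := by
  rw [hA, aux_aeval_conj U _ hU hU', aux_aeval_diagonal]
  have h : (fun i => aeval ((d i : ℂ)) p) = fun i => ((p.eval (d i) : ℝ) : ℂ) := by
    funext i
    simpa using aeval_algebraMap_apply_eq_algebraMap_eval (A := ℂ) (d i) p
  rw [h]

lemma aux_exists_interp (s : Finset ℝ) (f : ℝ → ℝ) :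
    ∃ p : ℝ[X], ∀ x ∈ s, p.eval x = f x :=
  ⟨Lagrange.interpolate s id f, fun x hx => by
    simpa using Lagrange.eval_interpolate_at_node (v := id) (r := f)
      Function.injective_id.injOn hx⟩

lemma aux_spectral {A : Matrix ι ι ℂ} (hA : A.IsHermitian) :
    A = (hA.eigenvectorUnitary : Matrix ι ι ℂ) *
      Matrix.diagonal (fun i => ((hA.eigenvalues i : ℝ) : ℂ)) *
      (hA.eigenvectorUnitary : Matrix ι ι ℂ)ᴴ := by
  convert hA.spectral_theorem using 2
  simp [Unitary.conjStarAlgAut_apply, Matrix.star_eq_conjTranspose, Function.comp_def]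

lemma aux_unitary_one₁ {A : Matrix ι ι ℂ} (hA : A.IsHermitian) :
    (hA.eigenvectorUnitary : Matrix ι ι ℂ) * (hA.eigenvectorUnitary : Matrix ι ι ℂ)ᴴ = 1 := by
  simpa [Matrix.star_eq_conjTranspose] using
    (Matrix.mem_unitaryGroup_iff.mp hA.eigenvectorUnitary.2)

lemma aux_unitary_one₂ {A : Matrix ι ι ℂ} (hA : A.IsHermitian) :
    (hA.eigenvectorUnitary : Matrix ι ι ℂ)ᴴ * (hA.eigenvectorUnitary : Matrix ι ι ℂ) = 1 := by
  simpa [Matrix.star_eq_conjTranspose] using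
    (Matrix.mem_unitaryGroup_iff'.mp hA.eigenvectorUnitary.2)

/-- decomposition independence of `mfun` -/
lemma aux_mfun_decomp {A U : Matrix ι ι ℂ} (hU : U * Uᴴ = 1) (hU' : Uᴴ * U = 1)
    {d : ι → ℝ} (hA : A = U * Matrix.diagonal (fun i => (d i : ℂ)) * Uᴴ) (f : ℝ → ℝ) :
    mfun f A = U * Matrix.diagonal (fun i => ((f (d i) : ℝ) : ℂ)) * Uᴴ := by
  have hherm : A.IsHermitian := by
    rw [hA]
    unfold Matrix.IsHermitian
    simp only [Matrix.conjTranspose_mul, Matrix.conjTranspose_conjTranspose,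
      Matrix.diagonal_conjTranspose]
    have hst : (star fun i : ι => ((d i : ℝ) : ℂ)) = fun i : ι => ((d i : ℝ) : ℂ) := by
      funext i; simp
    rw [hst, ← Matrix.mul_assoc]
  obtain ⟨p, hp⟩ := aux_exists_interp
    ((Finset.univ.image d) ∪ (Finset.univ.image hherm.eigenvalues)) f
  have key : ∀ x : ℝ, (x ∈ Finset.univ.image d ∨ x ∈ Finset.univ.image hherm.eigenvalues) →
      p.eval x = f x := fun x hx => hp x (Finset.mem_union.mpr hx)
  have h1 : mfun f A = aeval A p := by
    rw [mfun, dif_pos hherm,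
      aux_aeval_decomp (aux_unitary_one₁ hherm) (aux_unitary_one₂ hherm) (aux_spectral hherm) p,
      Matrix.star_eq_conjTranspose]
    have : (fun i => ((f (hherm.eigenvalues i) : ℝ) : ℂ)) =
        fun i => ((p.eval (hherm.eigenvalues i) : ℝ) : ℂ) := by
      funext i
      rw [key _ (Or.inr (Finset.mem_image_of_mem _ (Finset.mem_univ i)))]
    rw [this]
  have h2 : (fun i => ((p.eval (d i) : ℝ) : ℂ)) = fun i => ((f (d i) : ℝ) : ℂ) := by
    funext i
    rw [key _ (Or.inl (Finset.mem_image_of_mem _ (Finset.mem_univ i)))]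
  rw [h1, aux_aeval_decomp hU hU' hA p, h2]

end FunCalc
section Trace
variable {ι κ : Type*} [Fintype ι] [DecidableEq ι] [Fintype κ] [DecidableEq κ]

lemma aux_trace_conj_diag (U : Matrix ι ι ℂ) (hU' : Uᴴ * U = 1) (g : ι → ℂ) :
    (U * Matrix.diagonal g * Uᴴ).trace = ∑ i, g i := by
  rw [Matrix.trace_mul_cycle, hU', Matrix.one_mul, Matrix.trace_diagonal]

lemma aux_traceR_mfun {A U : Matrix ι ι ℂ} (hU : U * Uᴴ = 1) (hU' : Uᴴ * U = 1)
    {d : ι → ℝ} (hA : A = U * Matrix.diagonal (fun i => (d i : ℂ)) * Uᴴ) (f : ℝ → ℝ) :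
    traceR (mfun f A) = ∑ i, f (d i) := by
  rw [traceR, aux_mfun_decomp hU hU' hA f, aux_trace_conj_diag U hU']
  rw [Complex.re_sum]
  simp

lemma aux_aeval_Xmul {μ : Type*} [Fintype μ] [DecidableEq μ] (q : Polynomial ℝ)
    (C : Matrix μ μ ℂ) :
    Polynomial.aeval C (Polynomial.X * q) = ∑ k ∈ Finset.range (q.natDegree + 1),
      q.coeff k • C ^ (k + 1) := by
  rw [_root_.map_mul, Polynomial.aeval_X, Polynomial.aeval_eq_sum_range, Finset.mul_sum]
  refine Finset.sum_congr rfl fun k _ => ?_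
  rw [Matrix.mul_smul, ← pow_succ']

/-- `Tr f(B) = Tr f(B')` when all moments agree and `f 0 = 0`. -/
lemma aux_traceR_mfun_eq_of_moments (B : Matrix ι ι ℂ) (B' : Matrix κ κ ℂ)
    (hB : B.IsHermitian) (hB' : B'.IsHermitian) (f : ℝ → ℝ) (hf : f 0 = 0)
    (hmom : ∀ k : ℕ, (B ^ (k + 1)).trace = (B' ^ (k + 1)).trace) :
    traceR (mfun f B) = traceR (mfun f B') := by
  obtain ⟨p, hp⟩ := aux_exists_interp
    ((Finset.univ.image hB.eigenvalues ∪ Finset.univ.image hB'.eigenvalues) ∪ {0}) f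
  have hp0 : p.eval 0 = 0 := by
    rw [hp 0 (Finset.mem_union_right _ (Finset.mem_singleton_self 0)), hf]
  have hpB : ∀ i, p.eval (hB.eigenvalues i) = f (hB.eigenvalues i) := fun i =>
    hp _ (Finset.mem_union_left _ (Finset.mem_union_left _
      (Finset.mem_image_of_mem _ (Finset.mem_univ i))))
  have hpB' : ∀ i, p.eval (hB'.eigenvalues i) = f (hB'.eigenvalues i) := fun i =>
    hp _ (Finset.mem_union_left _ (Finset.mem_union_right _
      (Finset.mem_image_of_mem _ (Finset.mem_univ i))))
  -- express traces via aeval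
  have hXq : p = Polynomial.X * p.divX := by
    conv_lhs => rw [← Polynomial.X_mul_divX_add p]
    rw [Polynomial.coeff_zero_eq_eval_zero, hp0, map_zero, add_zero]
  set q := p.divX with hq
  have tB : (Polynomial.aeval B p).trace = (Polynomial.aeval B' p).trace := by
    rw [hXq, aux_aeval_Xmul q B, aux_aeval_Xmul q B', Matrix.trace_sum, Matrix.trace_sum]
    refine Finset.sum_congr rfl fun k _ => ?_
    rw [Matrix.trace_smul, Matrix.trace_smul, hmom k]
  have eB := aux_aeval_decomp (aux_unitary_one₁ hB) (aux_unitary_one₂ hB) (aux_spectral hB) p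
  have eB' := aux_aeval_decomp (aux_unitary_one₁ hB') (aux_unitary_one₂ hB') (aux_spectral hB') p
  have trB : traceR (mfun f B) = (Polynomial.aeval B p).trace.re := by
    rw [aux_traceR_mfun (aux_unitary_one₁ hB) (aux_unitary_one₂ hB) (aux_spectral hB) f,
      eB, aux_trace_conj_diag _ (aux_unitary_one₂ hB), Complex.re_sum]
    simp only [Complex.ofReal_re]
    exact Finset.sum_congr rfl fun i _ => (hpB i).symm
  have trB' : traceR (mfun f B') = (Polynomial.aeval B' p).trace.re := by
    rw [aux_traceR_mfun (aux_unitary_one₁ hB') (aux_unitary_one₂ hB') (aux_spectral hB') f,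
      eB', aux_trace_conj_diag _ (aux_unitary_one₂ hB'), Complex.re_sum]
    simp only [Complex.ofReal_re]
    exact Finset.sum_congr rfl fun i _ => (hpB' i).symm
  rw [trB, trB', tB]

lemma aux_pow_mul_conjT (C : Matrix ι κ ℂ) (k : ℕ) :
    (C * Cᴴ) ^ (k + 1) = C * (Cᴴ * C) ^ k * Cᴴ := by
  induction k with
  | zero => simp [Matrix.mul_assoc]
  | succ k ih =>
    rw [pow_succ, ih, pow_succ]
    simp only [Matrix.mul_assoc]

lemma aux_trace_pow_mul_conjT (C : Matrix ι κ ℂ) (k : ℕ) :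
    ((C * Cᴴ) ^ (k + 1)).trace = ((Cᴴ * C) ^ (k + 1)).trace := by
  rw [aux_pow_mul_conjT, Matrix.trace_mul_cycle, ← pow_succ']

lemma aux_trace_map_conj (B : Matrix ι ι ℂ) :
    (B.map (starRingEnd ℂ)).trace = (starRingEnd ℂ) B.trace := by
  simp [Matrix.trace, Matrix.diag, Matrix.map_apply, map_sum]

lemma aux_map_conj_pow (B : Matrix ι ι ℂ) (k : ℕ) :
    (B.map (starRingEnd ℂ)) ^ k = (B ^ k).map (starRingEnd ℂ) := by
  rw [← RingHom.mapMatrix_apply, ← map_pow, RingHom.mapMatrix_apply]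

/-- The central analytic lemma: `Tr f(Aᵀ (Aᵀ)ᴴ) = Tr f(A Aᴴ)` for `f 0 = 0`. -/
lemma aux_key_traceR (A : Matrix ι κ ℂ) (f : ℝ → ℝ) (hf : f 0 = 0) :
    traceR (mfun f (Aᵀ * Aᵀᴴ)) = traceR (mfun f (A * Aᴴ)) := by
  apply aux_traceR_mfun_eq_of_moments _ _ (Matrix.isHermitian_mul_conjTranspose_self _)
    (Matrix.isHermitian_mul_conjTranspose_self _) f hf
  intro k
  rw [aux_trace_pow_mul_conjT]
  have h1 : Aᵀᴴ * Aᵀ = (A * Aᴴ).map (starRingEnd ℂ) := by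
    ext x y
    simp [Matrix.mul_apply, Matrix.conjTranspose_apply, Matrix.transpose_apply,
      Matrix.map_apply, map_sum, mul_comm]
  rw [h1, aux_map_conj_pow, aux_trace_map_conj]
  have h2 : ((A * Aᴴ) ^ (k + 1)).IsHermitian :=
    (Matrix.isHermitian_mul_conjTranspose_self A).pow (k + 1)
  have h3 := Matrix.trace_conjTranspose ((A * Aᴴ) ^ (k + 1))
  rw [h2.eq] at h3
  exact h3.symm

end Trace
section Outer
variable {ι κ : Type*} [Fintype ι] [DecidableEq ι] [Fintype κ] [DecidableEq κ]

/-- rank-one outer product `u uᴴ` -/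
def outerMat (u : ι → ℂ) : Matrix ι ι ℂ :=
  Matrix.of fun p q => u p * star (u q)

lemma outerMat_posSemidef (u : ι → ℂ) : (outerMat u).PosSemidef := by
  refine Matrix.PosSemidef.of_dotProduct_mulVec_nonneg ?_ ?_
  · ext p q
    simp [outerMat, Matrix.conjTranspose_apply, mul_comm]
  · intro x
    have h : dotProduct (star x) ((outerMat u) *ᵥ x) =
        star (dotProduct (star u) x) * (dotProduct (star u) x) := by
      simp only [dotProduct, Matrix.mulVec, outerMat, Matrix.of_apply, Pi.star_apply,
        star_sum, StarMul.star_mul, star_star, Finset.mul_sum, Finset.sum_mul]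
      rw [Finset.sum_comm]
      refine Finset.sum_congr rfl fun p _ => Finset.sum_congr rfl fun q _ => ?_
      ring
    rw [h]
    exact star_mul_self_nonneg _

lemma outerMat_trace (u : ι → ℂ) : (outerMat u).trace = ∑ p, u p * star (u p) := by
  simp [outerMat, Matrix.trace, Matrix.diag]

lemma aux_rank_pos {A : Matrix ι κ ℂ} (hA : A ≠ 0) : A.rank ≠ 0 := by
  intro h
  apply hA
  rw [Matrix.rank] at h
  have hr : LinearMap.range A.mulVecLin = ⊥ := Submodule.finrank_eq_zero.mp h
  rw [LinearMap.range_eq_bot] at hr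
  ext i j
  have := congrFun (congrArg DFunLike.coe hr) (Pi.single j 1)
  have h2 := congrFun this i
  simpa [Matrix.mulVecLin_apply, Matrix.mulVec_single] using h2

lemma outerMat_rank_one {u : ι → ℂ} (hu : u ≠ 0) : (outerMat u).rank = 1 := by
  have hne : outerMat u ≠ 0 := by
    obtain ⟨p, hp⟩ := Function.ne_iff.mp hu
    intro h
    have := congrFun (congrFun (congrArg (fun M : Matrix ι ι ℂ => (M : ι → ι → ℂ)) h) p) p
    simp only [outerMat, Matrix.of_apply, Matrix.zero_apply] at this
    exact mul_ne_zero hp (star_ne_zero.mpr hp) this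
  have hfac : outerMat u = (Matrix.of fun p (_ : Unit) => u p) *
      (Matrix.of fun (_ : Unit) q => star (u q)) := by
    ext p q
    simp [outerMat, Matrix.mul_apply]
  have hle : (outerMat u).rank ≤ 1 := by
    rw [hfac]
    calc ((Matrix.of fun p (_ : Unit) => u p) * _).rank
        ≤ (Matrix.of fun p (_ : Unit) => u p).rank := Matrix.rank_mul_le_left _ _
      _ ≤ Fintype.card Unit := Matrix.rank_le_card_width _
      _ = 1 := by simp
  have := aux_rank_pos hne
  omega

/-- entries of `U diag(g) Uᴴ` -/
lemma aux_conj_diag_apply (U : Matrix ι ι ℂ) (g : ι → ℂ) (k l : ι) :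
    (U * Matrix.diagonal g * Uᴴ) k l = ∑ a, U k a * g a * star (U l a) := by
  simp [Matrix.mul_apply, Matrix.diagonal, Matrix.conjTranspose_apply, Finset.sum_mul]

/-- every pure state is an outer product -/
lemma pure_exists_outer {φ : Matrix ι ι ℂ} (hφ : IsPureState φ) :
    ∃ u : ι → ℂ, φ = outerMat u := by
  obtain ⟨⟨hpsd, htr⟩, hrank⟩ := hφ
  have hH : φ.IsHermitian := hpsd.1
  have hcard : Fintype.card {i // hH.eigenvalues i ≠ 0} = 1 := by
    rw [← hH.rank_eq_card_non_zero_eigs, hrank]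
  obtain ⟨⟨i₀, hi₀⟩, huniq⟩ := Fintype.card_eq_one_iff.mp hcard
  have hzero : ∀ i, i ≠ i₀ → hH.eigenvalues i = 0 := by
    intro i hi
    by_contra h
    exact hi (congrArg Subtype.val (huniq ⟨i, h⟩))
  have hnn : 0 ≤ hH.eigenvalues i₀ := hpsd.eigenvalues_nonneg i₀
  set U : Matrix ι ι ℂ := (hH.eigenvectorUnitary : Matrix ι ι ℂ) with hUdef
  refine ⟨fun p => (Real.sqrt (hH.eigenvalues i₀) : ℂ) * U p i₀, ?_⟩
  have hfull : ∀ p q, φ p q =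
      ∑ a, U p a * ((hH.eigenvalues a : ℝ) : ℂ) * star (U q a) := by
    intro p q
    conv_lhs => rw [aux_spectral hH]
    exact aux_conj_diag_apply U _ p q
  ext p q
  rw [hfull p q, Finset.sum_eq_single i₀]
  · have hs : ((Real.sqrt (hH.eigenvalues i₀) : ℝ) : ℂ) *
        ((Real.sqrt (hH.eigenvalues i₀) : ℝ) : ℂ) = ((hH.eigenvalues i₀ : ℝ) : ℂ) := by
      rw [← Complex.ofReal_mul, Real.mul_self_sqrt hnn]
    simp only [outerMat, Matrix.of_apply, StarMul.star_mul, Complex.star_def,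
      Complex.conj_ofReal]
    rw [← hs]
    ring
  · intro i _ hi
    rw [hzero i hi]
    simp
  · intro h
    exact absurd (Finset.mem_univ i₀) h

end Outer
section PartialTrace
variable {ι κ : Type*} [Fintype ι] [DecidableEq ι] [Fintype κ] [DecidableEq κ]

lemma trLeft_trace (M : Matrix (ι × κ) (ι × κ) ℂ) : (trLeft M).trace = M.trace := by
  rw [Matrix.trace, Matrix.trace]
  simp only [Matrix.diag, trLeft, Matrix.of_apply]
  rw [Fintype.sum_prod_type]
  exact Finset.sum_comm

lemma trLeft_smul (c : ℂ) (M : Matrix (ι × κ) (ι × κ) ℂ) :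
    trLeft (c • M) = c • trLeft M := by
  ext k l
  simp [trLeft, Finset.mul_sum]

lemma trLeft_eq_sum_submatrix (M : Matrix (ι × κ) (ι × κ) ℂ) :
    trLeft M = ∑ a : ι, M.submatrix (fun k => (a, k)) (fun k => (a, k)) := by
  ext k l
  simp [trLeft, Matrix.sum_apply, Matrix.submatrix_apply]

lemma aux_posSemidef_zero : (0 : Matrix κ κ ℂ).PosSemidef := Matrix.PosSemidef.zero

lemma trLeft_posSemidef {M : Matrix (ι × κ) (ι × κ) ℂ} (hM : M.PosSemidef) :
    (trLeft M).PosSemidef := by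
  rw [trLeft_eq_sum_submatrix]
  refine Finset.sum_induction _ _ (fun A B hA hB => hA.add hB) Matrix.PosSemidef.zero ?_
  exact fun a _ => hM.submatrix _

end PartialTrace
section Bridge
variable {N E B : Type*} [Fintype N] [DecidableEq N] [Fintype E] [DecidableEq E]
  [Fintype B] [DecidableEq B]

lemma aux_sandwich_std (V : Matrix B N ℂ) (k l : N) (p q : B) :
    (V * Matrix.single k l (1 : ℂ) * Vᴴ) p q = V p k * star (V q l) := by
  rw [Matrix.mul_apply]
  simp only [Matrix.mul_apply, Matrix.single, Matrix.of_apply, Matrix.conjTranspose_apply]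
  simp [ite_and, Finset.sum_ite_eq, Finset.mul_sum, Finset.sum_mul, ite_mul, mul_ite]

lemma aux_tensorMap_apply (M : Matrix N N ℂ →ₗ[ℂ] Matrix B B ℂ)
    (φ : Matrix (N × N) (N × N) ℂ) (a a' : N) (b b' : B) :
    tensorMap LinearMap.id M φ (a, b) (a', b') =
      ∑ k : N, ∑ l : N, φ (a, k) (a', l) * M (Matrix.single k l 1) b b' := by
  have hstd : ∀ k l a a' : N, Matrix.single k l (1 : ℂ) a a' =
      if k = a ∧ l = a' then 1 else 0 := fun _ _ _ _ => rfl
  show (∑ k₁ : N, ∑ l₁ : N, ∑ k₂ : N, ∑ l₂ : N,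
      φ (k₁, k₂) (l₁, l₂) • (Matrix.single k₁ l₁ (1:ℂ) ⊗ₖ
        M (Matrix.single k₂ l₂ 1))) (a, b) (a', b') = _
  simp only [Matrix.sum_apply, Matrix.smul_apply, Matrix.kroneckerMap_apply, hstd,
    smul_eq_mul, boole_mul, ite_and, mul_ite, mul_zero, ite_mul, zero_mul,
    Finset.sum_ite_irrel, Finset.sum_const_zero, Finset.sum_ite_eq', Finset.mem_univ,
    if_true, one_mul]


lemma aux_sum3_comm {X Y Z : Type*} [Fintype X] [Fintype Y] [Fintype Z] (f : X → Y → Z → ℂ) :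
    ∑ x, ∑ y, ∑ z, f x y z = ∑ z, ∑ x, ∑ y, f x y z := by
  calc ∑ x, ∑ y, ∑ z, f x y z = ∑ x, ∑ z, ∑ y, f x y z :=
        Finset.sum_congr rfl fun x _ => Finset.sum_comm
    _ = ∑ z, ∑ x, ∑ y, f x y z := Finset.sum_comm

lemma aux_sum4_comm {X Y Z W : Type*} [Fintype X] [Fintype Y] [Fintype Z] [Fintype W]
    (f : X → Y → Z → W → ℂ) :
    ∑ x, ∑ y, ∑ z, ∑ w, f x y z w = ∑ w, ∑ x, ∑ y, ∑ z, f x y z w := by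
  calc ∑ x, ∑ y, ∑ z, ∑ w, f x y z w = ∑ x, ∑ w, ∑ y, ∑ z, f x y z w :=
        Finset.sum_congr rfl fun x _ => aux_sum3_comm _
    _ = ∑ w, ∑ x, ∑ y, ∑ z, f x y z w := Finset.sum_comm

lemma aux_conj_apply (V : Matrix B N ℂ) (X : Matrix N N ℂ) (p q : B) :
    (V * X * Vᴴ) p q = ∑ k, ∑ l, V p k * X k l * star (V q l) := by
  simp only [Matrix.mul_apply, Matrix.conjTranspose_apply, Finset.sum_mul, Finset.mul_sum]
  exact Finset.sum_comm

lemma bridge_tensor (M : Matrix N N ℂ →ₗ[ℂ] Matrix B B ℂ) (V : Matrix (B × E) N ℂ)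
    (hrep : ∀ ρ, M ρ = trRight (V * ρ * Vᴴ)) (u : N × N → ℂ) :
    tensorMap LinearMap.id M (outerMat u) =
      (Matrix.of fun (p : N × B) (c : E) => ∑ k, V (p.2, c) k * u (p.1, k)) *
      (Matrix.of fun (p : N × B) (c : E) => ∑ k, V (p.2, c) k * u (p.1, k))ᴴ := by
  ext ⟨a, b⟩ ⟨a', b'⟩
  rw [aux_tensorMap_apply]
  have hM : ∀ k l : N, M (Matrix.single k l 1) b b' =
      ∑ c : E, V (b, c) k * star (V (b', c) l) := by
    intro k l
    rw [hrep]
    show (∑ c, (V * Matrix.single k l (1:ℂ) * Vᴴ) (b, c) (b', c)) = _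
    exact Finset.sum_congr rfl fun c _ => aux_sandwich_std V k l (b, c) (b', c)
  simp only [hM, outerMat, Matrix.of_apply, Matrix.mul_apply, Matrix.conjTranspose_apply,
    star_sum, StarMul.star_mul, star_star, Finset.mul_sum, Finset.sum_mul]
  rw [aux_sum3_comm]
  refine Finset.sum_congr rfl fun c _ => ?_
  rw [Finset.sum_comm]
  refine Finset.sum_congr rfl fun k _ => Finset.sum_congr rfl fun l _ => ?_
  ring

lemma bridge_trLeft (V : Matrix (B × E) N ℂ) (u : N × N → ℂ) :
    trLeft (V * trLeft (outerMat u) * Vᴴ) =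
      (Matrix.of fun (p : N × B) (c : E) => ∑ k, V (p.2, c) k * u (p.1, k))ᵀ *
      (Matrix.of fun (p : N × B) (c : E) => ∑ k, V (p.2, c) k * u (p.1, k))ᵀᴴ := by
  ext c c'
  show (∑ b : B, (V * trLeft (outerMat u) * Vᴴ) (b, c) (b, c')) = _
  simp only [aux_conj_apply, trLeft, outerMat, Matrix.of_apply, Matrix.mul_apply,
    Matrix.conjTranspose_apply, Matrix.transpose_apply, star_sum, StarMul.star_mul,
    star_star, Finset.mul_sum, Finset.sum_mul]
  rw [Fintype.sum_prod_type]
  rw [aux_sum4_comm]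
  refine Finset.sum_congr rfl fun a _ => Finset.sum_congr rfl fun b _ =>
    Finset.sum_congr rfl fun l _ => Finset.sum_congr rfl fun k _ => ?_
  ring


end Bridge
section Schatten
variable {ι κ : Type*} [Fintype ι] [DecidableEq ι] [Fintype κ] [DecidableEq κ]

lemma aux_schatten_eq (A : Matrix ι κ ℂ) {α : ℝ} (hα : α ≠ 0) :
    schatten α (Aᵀ * Aᵀᴴ) = schatten α (A * Aᴴ) := by
  rw [schatten, schatten, mpow, mpow, aux_key_traceR A (fun x => x ^ α) (Real.zero_rpow hα)]

lemma aux_schatten_smul {B : Matrix ι ι ℂ} (hB : B.PosSemidef) {c : ℝ} (hc : 0 ≤ c)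
    {α : ℝ} (hα : 0 < α) :
    schatten α ((c : ℂ) • B) = c * schatten α B := by
  have hH := hB.1
  have hd : (c : ℂ) • B = (hH.eigenvectorUnitary : Matrix ι ι ℂ) *
      Matrix.diagonal (fun i => ((c * hH.eigenvalues i : ℝ) : ℂ)) *
      (hH.eigenvectorUnitary : Matrix ι ι ℂ)ᴴ := by
    have hD : (c : ℂ) • Matrix.diagonal (fun i => ((hH.eigenvalues i : ℝ) : ℂ)) =
        Matrix.diagonal (fun i => ((c * hH.eigenvalues i : ℝ) : ℂ)) := by
      ext i j
      rcases eq_or_ne i j with rfl | h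
      · simp [Matrix.diagonal_apply_eq, Complex.ofReal_mul]
      · simp [Matrix.diagonal_apply_ne _ h]
    conv_lhs => rw [aux_spectral hH]
    rw [← Matrix.smul_mul, ← Matrix.mul_smul, hD]
  have h1 : traceR (mpow ((c : ℂ) • B) α) = ∑ i, (c * hH.eigenvalues i) ^ α := by
    rw [mpow]
    exact aux_traceR_mfun (aux_unitary_one₁ hH) (aux_unitary_one₂ hH) hd _
  have h2 : traceR (mpow B α) = ∑ i, (hH.eigenvalues i) ^ α := by
    rw [mpow]
    exact aux_traceR_mfun (aux_unitary_one₁ hH) (aux_unitary_one₂ hH) (aux_spectral hH) _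
  have h3 : ∀ i, (c * hH.eigenvalues i) ^ α = c ^ α * (hH.eigenvalues i) ^ α := fun i =>
    Real.mul_rpow hc (hB.eigenvalues_nonneg i)
  have hS : 0 ≤ ∑ i, (hH.eigenvalues i) ^ α :=
    Finset.sum_nonneg fun i _ => Real.rpow_nonneg (hB.eigenvalues_nonneg i) α
  rw [schatten, schatten, h1, h2]
  simp only [h3, ← Finset.mul_sum]
  rw [Real.mul_rpow (Real.rpow_nonneg hc α) hS, ← Real.rpow_mul hc, mul_one_div,
    div_self (ne_of_gt hα), Real.rpow_one]

end Schatten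
end QIT
open QIT in
/-- Expression for the completely bounded `1→α` quasi-norm via the complementary map
of a Stinespring representation. -/
theorem cbNorm_eq_inf_complementary (n m e : ℕ)
    (M : Matrix (Fin n) (Fin n) ℂ →ₗ[ℂ] Matrix (Fin m) (Fin m) ℂ)
    (hM : IsCPMap M)
    (V : Matrix (Fin m × Fin e) (Fin n) ℂ)
    (hrep : ∀ ρ : Matrix (Fin n) (Fin n) ℂ, M ρ = trRight (V * ρ * Vᴴ))
    (α : ℝ) (hα₀ : 0 < α) (hα₁ : α < 1) :
    cbNorm α M = sInf { r : ℝ | ∃ X : Matrix (Fin n) (Fin n) ℂ,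
      X.PosSemidef ∧ X ≠ 0 ∧
      r = schatten α (trLeft (V * X * Vᴴ)) / schatten α X } := by
  have hα : α ≠ 0 := ne_of_gt hα₀
  rw [cbNorm]
  congr 1
  ext r
  simp only [Set.mem_setOf_eq]
  constructor
  · rintro ⟨φ, hφ, rfl⟩
    obtain ⟨u, rfl⟩ := pure_exists_outer hφ
    refine ⟨trLeft (outerMat u), trLeft_posSemidef (outerMat_posSemidef u), ?_, ?_⟩
    · intro h0
      have h1 : (trLeft (outerMat u)).trace = 1 := by rw [trLeft_trace]; exact hφ.1.2
      rw [h0] at h1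
      simp at h1
    · have keyS : schatten α (tensorMap LinearMap.id M (outerMat u)) =
          schatten α (trLeft (V * trLeft (outerMat u) * Vᴴ)) := by
        rw [bridge_tensor M V hrep u, bridge_trLeft V u]
        exact (aux_schatten_eq _ hα).symm
      rw [keyS]
  · rintro ⟨X, hX, hne, rfl⟩
    have hlnn : ∀ i, 0 ≤ hX.1.eigenvalues i := hX.eigenvalues_nonneg
    have hXd := aux_spectral hX.1
    set U : Matrix (Fin n) (Fin n) ℂ := (hX.1.eigenvectorUnitary : Matrix (Fin n) (Fin n) ℂ) with hUdef
    have hex : ∃ i, hX.1.eigenvalues i ≠ 0 := by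
      by_contra h
      push_neg at h
      apply hne
      rw [hXd]
      have hz : (fun i => ((hX.1.eigenvalues i : ℝ) : ℂ)) = fun _ => (0 : ℂ) :=
        funext fun i => by rw [h i]; simp
      rw [hz]
      simp
    obtain ⟨i₀, hi₀⟩ := hex
    have ht0 : 0 < ∑ i, hX.1.eigenvalues i :=
      Finset.sum_pos' (fun i _ => hlnn i)
        ⟨i₀, Finset.mem_univ _, lt_of_le_of_ne (hlnn i₀) (Ne.symm hi₀)⟩
    set t : ℝ := ∑ i, hX.1.eigenvalues i with ht
    set u : (Fin n × Fin n) → ℂ :=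
      fun p => ((Real.sqrt (hX.1.eigenvalues p.1 / t) : ℝ) : ℂ) * U p.2 p.1 with hu
    -- partial trace of the purification
    have htl : trLeft (outerMat u) = ((t⁻¹ : ℝ) : ℂ) • X := by
      ext k l
      have hXkl : X k l = ∑ a, U k a * ((hX.1.eigenvalues a : ℝ) : ℂ) * star (U l a) := by
        conv_lhs => rw [hXd]
        exact aux_conj_diag_apply U _ k l
      simp only [trLeft, outerMat, Matrix.of_apply, Matrix.smul_apply, hXkl, smul_eq_mul,
        Finset.mul_sum]
      refine Finset.sum_congr rfl fun a _ => ?_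
      have hs : ((Real.sqrt (hX.1.eigenvalues a / t) : ℝ) : ℂ) *
          ((Real.sqrt (hX.1.eigenvalues a / t) : ℝ) : ℂ) =
          ((hX.1.eigenvalues a / t : ℝ) : ℂ) := by
        rw [← Complex.ofReal_mul, Real.mul_self_sqrt (div_nonneg (hlnn a) (le_of_lt ht0))]
      simp only [hu, StarMul.star_mul, Complex.star_def, Complex.conj_ofReal]
      have hdiv : ((hX.1.eigenvalues a / t : ℝ) : ℂ) =
          ((t⁻¹ : ℝ) : ℂ) * ((hX.1.eigenvalues a : ℝ) : ℂ) := by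
        push_cast
        ring
      calc ((Real.sqrt (hX.1.eigenvalues a / t) : ℝ) : ℂ) * U k a *
            ((starRingEnd ℂ) (U l a) * ((Real.sqrt (hX.1.eigenvalues a / t) : ℝ) : ℂ))
          = (((Real.sqrt (hX.1.eigenvalues a / t) : ℝ) : ℂ) *
              ((Real.sqrt (hX.1.eigenvalues a / t) : ℝ) : ℂ)) *
              (U k a * (starRingEnd ℂ) (U l a)) := by ring
        _ = ((t⁻¹ : ℝ) : ℂ) * (U k a * ((hX.1.eigenvalues a : ℝ) : ℂ) *
              (starRingEnd ℂ) (U l a)) := by rw [hs, hdiv]; ring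
    -- column sums of the unitary
    have hcol : ∀ a, ∑ k, U k a * star (U k a) = 1 := by
      intro a
      have h1 := aux_unitary_one₂ hX.1
      have h2 := congrFun (congrFun (congrArg (fun M : Matrix (Fin n) (Fin n) ℂ =>
        (M : Fin n → Fin n → ℂ)) h1) a) a
      simp only [Matrix.mul_apply, Matrix.conjTranspose_apply, Matrix.one_apply_eq] at h2
      rw [← h2]
      exact Finset.sum_congr rfl fun k _ => by ring
    -- the purification is a state
    have hstate : IsState (outerMat u) := by
      refine ⟨outerMat_posSemidef u, ?_⟩
      rw [outerMat_trace, Fintype.sum_prod_type]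
      have hterm : ∀ a, ∑ k, u (a, k) * star (u (a, k)) =
          ((hX.1.eigenvalues a / t : ℝ) : ℂ) := by
        intro a
        have hs : ((Real.sqrt (hX.1.eigenvalues a / t) : ℝ) : ℂ) *
            ((Real.sqrt (hX.1.eigenvalues a / t) : ℝ) : ℂ) =
            ((hX.1.eigenvalues a / t : ℝ) : ℂ) := by
          rw [← Complex.ofReal_mul, Real.mul_self_sqrt (div_nonneg (hlnn a) (le_of_lt ht0))]
        calc ∑ k, u (a, k) * star (u (a, k))
            = ∑ k, (((Real.sqrt (hX.1.eigenvalues a / t) : ℝ) : ℂ) *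
                ((Real.sqrt (hX.1.eigenvalues a / t) : ℝ) : ℂ)) * (U k a * star (U k a)) := by
              refine Finset.sum_congr rfl fun k _ => ?_
              simp only [hu, StarMul.star_mul, Complex.star_def, Complex.conj_ofReal]
              ring
          _ = ((hX.1.eigenvalues a / t : ℝ) : ℂ) * ∑ k, U k a * star (U k a) := by
              rw [hs, Finset.mul_sum]
          _ = _ := by rw [hcol a, mul_one]
      rw [Finset.sum_congr rfl fun a _ => hterm a]
      rw [← Complex.ofReal_sum]
      rw [show ∑ a, hX.1.eigenvalues a / t = (∑ a, hX.1.eigenvalues a) / t from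
        (Finset.sum_div _ _ _).symm]
      rw [← ht, div_self (ne_of_gt ht0)]
      simp
    -- it is pure
    have hune : u ≠ 0 := by
      have hk : ∃ k, U k i₀ ≠ 0 := by
        by_contra h
        push_neg at h
        have := hcol i₀
        rw [Finset.sum_congr rfl fun k _ => by rw [h k, zero_mul]] at this
        simp at this
      obtain ⟨k₀, hk₀⟩ := hk
      intro h0
      have : u (i₀, k₀) = 0 := congrFun h0 (i₀, k₀)
      rw [hu] at this
      simp only [] at this
      rcases mul_eq_zero.mp this with h | h
      · rw [Complex.ofReal_eq_zero] at h
        exact absurd h (Real.sqrt_ne_zero'.mpr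
          (div_pos (lt_of_le_of_ne (hlnn i₀) (Ne.symm hi₀)) ht0))
      · exact hk₀ h
    refine ⟨outerMat u, ⟨hstate, outerMat_rank_one hune⟩, ?_⟩
    have keyS : schatten α (tensorMap LinearMap.id M (outerMat u)) =
        schatten α (trLeft (V * trLeft (outerMat u) * Vᴴ)) := by
      rw [bridge_tensor M V hrep u, bridge_trLeft V u]
      exact (aux_schatten_eq _ hα).symm
    rw [keyS, htl]
    have hVs : V * (((t⁻¹ : ℝ) : ℂ) • X) * Vᴴ = ((t⁻¹ : ℝ) : ℂ) • (V * X * Vᴴ) := by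
      rw [Matrix.mul_smul, Matrix.smul_mul]
    rw [hVs, trLeft_smul]
    have hinv : (0 : ℝ) ≤ t⁻¹ := le_of_lt (inv_pos.mpr ht0)
    rw [aux_schatten_smul (trLeft_posSemidef (hX.mul_mul_conjTranspose_same V)) hinv hα₀,
      aux_schatten_smul hX hinv hα₀]
    rw [mul_div_mul_left _ _ (ne_of_gt (inv_pos.mpr ht0))]
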